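/- arXiv:1506.00671 — 5 statements merged into one kernel-verified Lean document; each statement's English description precedes it below -/
import Mathlib

section
/- Let f be a probability density function on an interval I, let μ be a finite Borel measure on I, let 𝒥 = {J_1, …, J_ℓ} be a collection of ℓ pairwise disjoint bounded subintervals of I of positive length, and let h* : I → ℝ be a function that is constant on each J_i. Define the flattening h̄ of μ over 𝒥 by h̄(x) := μ(J_i)/|J_i| for x ∈ J_i, where |J_i| is the length of J_i. Then Σ_{i=1}^ℓ ∫_{J_i} |h̄ − h*| ≤ Σ_{i=1}^ℓ ∫_{J_i} |f − h*| + ‖μ − f‖_{A_ℓ,𝒥}. -/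
open MeasureTheory Set

/-! On `Jᵢ` both `h̄` and `h⋆ = cᵢ` are constant, so `∫_{Jᵢ} |h̄ − h⋆| = |μ(Jᵢ) − cᵢ |Jᵢ||`.
Passing through `∫_{Jᵢ} f` by the triangle inequality splits this into
`|∫_{Jᵢ} (f − cᵢ)| ≤ ∫_{Jᵢ} |f − h⋆|` and `|μ(Jᵢ) − ∫_{Jᵢ} f|`; summed over `i`, the latter
terms form one of the sums whose supremum is the `A_ℓ`-distance, and that supremum is finite
because `μ` is finite and `f` is integrable. -/

/-- The `A_k`-distance between a finite Borel measure `μ` and an integrable function `g` on a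
finite family `𝒥` of pairwise disjoint intervals: the supremum over all collections of `k`
pairwise disjoint intervals, each contained in some member of `𝒥`, of
`∑ᵢ |μ(Iᵢ) − ∫_{Iᵢ} g|`. -/
noncomputable def akDistFam (k : ℕ) {ℓ : ℕ} (𝒥 : Fin ℓ → Set ℝ) (g : ℝ → ℝ)
    (μ : Measure ℝ) : ℝ :=
  sSup { s : ℝ | ∃ I : Fin k → Set ℝ,
    (∀ i, (I i).OrdConnected ∧ ∃ j, I i ⊆ 𝒥 j) ∧
    (Pairwise fun i j => Disjoint (I i) (I j)) ∧
    s = ∑ i, |(μ (I i)).toReal - ∫ x in I i, g x| }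

/-- `f` is a probability density function on `I`. -/
def IsPDFOn (f : ℝ → ℝ) (I : Set ℝ) : Prop :=
  (∀ x ∈ I, 0 ≤ f x) ∧ IntegrableOn f I ∧ (∫ x in I, f x) = 1

section

variable {α : Type*} [MeasurableSpace α] {μ : Measure α} {s : Set α}

lemma setIntegral_abs_sub_of_eqOn_const {φ ψ : α → ℝ} {m c : ℝ} (hs : MeasurableSet s)
    (hμs : 0 < μ.real s) (hψ : ∀ x ∈ s, ψ x = m / μ.real s) (hφ : ∀ x ∈ s, φ x = c) :
    ∫ x in s, |ψ x - φ x| ∂μ = |m - c * μ.real s| := by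
  rw [setIntegral_congr_fun hs fun x hx => by rw [hψ x hx, hφ x hx], setIntegral_const,
    smul_eq_mul]
  nth_rewrite 1 [← abs_of_pos hμs]
  rw [← abs_mul, mul_sub, mul_div_cancel₀ _ hμs.ne', mul_comm]

lemma abs_setIntegral_sub_const_mul_le {f φ : α → ℝ} {c : ℝ} (hs : MeasurableSet s)
    (hμs : μ s ≠ ⊤) (hf : IntegrableOn f s μ) (hφ : ∀ x ∈ s, φ x = c) :
    |∫ x in s, f x ∂μ - c * μ.real s| ≤ ∫ x in s, |f x - φ x| ∂μ :=
  calc |∫ x in s, f x ∂μ - c * μ.real s| = |∫ x in s, (f x - c) ∂μ| := by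
        rw [integral_sub hf (integrableOn_const hμs), setIntegral_const, smul_eq_mul, mul_comm]
    _ ≤ ∫ x in s, |f x - c| ∂μ := abs_integral_le_integral_abs
    _ = ∫ x in s, |f x - φ x| ∂μ := setIntegral_congr_fun hs fun x hx => by rw [hφ x hx]

lemma sum_abs_measureReal_sub_setIntegral_le {ι : Type*} [Fintype ι] [IsFiniteMeasure μ]
    {ν : Measure α} {g : α → ℝ} {K : ι → Set α} (hK : ∀ i, MeasurableSet (K i))
    (hKd : Pairwise fun i j => Disjoint (K i) (K j)) (hKs : ∀ i, K i ⊆ s) (hg : IntegrableOn g s ν) :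
    ∑ i, |μ.real (K i) - ∫ x in K i, g x ∂ν| ≤ μ.real univ + ∫ x in s, |g x| ∂ν := by
  have hmeasure : ∑ i, μ.real (K i) ≤ μ.real univ :=
    sum_measureReal_le_measureReal_univ (fun i _ => hK i) fun i _ j _ hij => hKd hij
  have hintegral : ∑ i, ∫ x in K i, |g x| ∂ν ≤ ∫ x in s, |g x| ∂ν := by
    rw [← integral_iUnion_fintype hK hKd fun i => (hg.mono_set (hKs i)).abs]
    exact setIntegral_mono_set hg.abs (.of_forall fun x => abs_nonneg _)
      (iUnion_subset hKs).eventuallyLE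
  calc ∑ i, |μ.real (K i) - ∫ x in K i, g x ∂ν|
      ≤ ∑ i, (μ.real (K i) + ∫ x in K i, |g x| ∂ν) := by
        gcongr with i
        refine (abs_sub _ _).trans ?_
        rw [abs_of_nonneg measureReal_nonneg]
        gcongr
        exact abs_integral_le_integral_abs
    _ = ∑ i, μ.real (K i) + ∑ i, ∫ x in K i, |g x| ∂ν := Finset.sum_add_distrib
    _ ≤ μ.real univ + ∫ x in s, |g x| ∂ν := add_le_add hmeasure hintegral

end

lemma sum_le_akDistFam {k ℓ : ℕ} {𝒥 : Fin ℓ → Set ℝ} {g : ℝ → ℝ} {μ : Measure ℝ}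
    [IsFiniteMeasure μ] (hg : IntegrableOn g (⋃ j, 𝒥 j)) {K : Fin k → Set ℝ}
    (hK : ∀ i, (K i).OrdConnected ∧ ∃ j, K i ⊆ 𝒥 j)
    (hKd : Pairwise fun i j => Disjoint (K i) (K j)) :
    ∑ i, |(μ (K i)).toReal - ∫ x in K i, g x| ≤ akDistFam k 𝒥 g μ := by
  refine le_csSup ⟨μ.real univ + ∫ x in ⋃ j, 𝒥 j, |g x|, ?_⟩ ⟨K, hK, hKd, rfl⟩
  rintro _ ⟨K', hK', hK'd, rfl⟩
  refine sum_abs_measureReal_sub_setIntegral_le (fun i => (hK' i).1.measurableSet) hK'd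
    (fun i => ?_) hg
  obtain ⟨j, hj⟩ := (hK' i).2
  exact hj.trans (subset_iUnion 𝒥 j)

theorem stmt4_general (I : Set ℝ) (f : ℝ → ℝ) (hf : IsPDFOn f I)
    (μ : Measure ℝ) [IsFiniteMeasure μ]
    (ℓ : ℕ) (J : Fin ℓ → Set ℝ)
    (hJ : ∀ i, (J i).OrdConnected ∧ J i ⊆ I ∧ Bornology.IsBounded (J i) ∧ 0 < volume (J i))
    (hdisj : Pairwise fun i j => Disjoint (J i) (J j))
    (hstar hbar : ℝ → ℝ)
    (hconst : ∀ i, ∃ cst : ℝ, ∀ x ∈ J i, hstar x = cst)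
    (hflat : ∀ i, ∀ x ∈ J i, hbar x = (μ (J i)).toReal / (volume (J i)).toReal) :
    ∑ i, ∫ x in J i, |hbar x - hstar x| ≤
      (∑ i, ∫ x in J i, |f x - hstar x|) + akDistFam ℓ J f μ := by
  choose c hc using hconst
  have hJm i : MeasurableSet (J i) := (hJ i).1.measurableSet
  have hJfin i : volume (J i) ≠ ⊤ := (hJ i).2.2.1.measure_lt_top.ne
  have hJpos i : 0 < volume.real (J i) := ENNReal.toReal_pos (hJ i).2.2.2.ne' (hJfin i)
  have hfJ : IntegrableOn f (⋃ i, J i) := hf.2.1.mono_set (iUnion_subset fun i => (hJ i).2.1)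
  calc ∑ i, ∫ x in J i, |hbar x - hstar x|
      = ∑ i, |(μ (J i)).toReal - c i * volume.real (J i)| :=
        Finset.sum_congr rfl fun i _ =>
          setIntegral_abs_sub_of_eqOn_const (hJm i) (hJpos i) (hflat i) (hc i)
    _ ≤ ∑ i, (|(∫ x in J i, f x) - c i * volume.real (J i)| +
          |(μ (J i)).toReal - ∫ x in J i, f x|) := by
        gcongr with i
        exact (abs_sub_le _ _ _).trans_eq (add_comm _ _)
    _ = (∑ i, |(∫ x in J i, f x) - c i * volume.real (J i)|) +
          ∑ i, |(μ (J i)).toReal - ∫ x in J i, f x| := Finset.sum_add_distrib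
    _ ≤ (∑ i, ∫ x in J i, |f x - hstar x|) + akDistFam ℓ J f μ :=
        add_le_add
          (Finset.sum_le_sum fun i _ => abs_setIntegral_sub_const_mul_le (hJm i) (hJfin i)
            (hfJ.mono_set (subset_iUnion J i)) (hc i))
          (sum_le_akDistFam hfJ (fun i => ⟨(hJ i).1, i, subset_rfl⟩) hdisj)

/-- Let `f` be a pdf on an interval `I`, `μ` a finite Borel measure on `I`,
`𝒥 = (J₁, …, J_ℓ)` a collection of `ℓ` pairwise disjoint bounded subintervals of `I` of
positive length, and `h⋆ : I → ℝ` a function constant on each `Jᵢ`. Define the flattening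
`h̄` of `μ` over `𝒥` by `h̄(x) := μ(Jᵢ)/|Jᵢ|` for `x ∈ Jᵢ`. Then
`∑ᵢ ∫_{Jᵢ} |h̄ − h⋆| ≤ ∑ᵢ ∫_{Jᵢ} |f − h⋆| + ‖μ − f‖_{A_ℓ,𝒥}`. -/
theorem stmt4 (I : Set ℝ) (hI : I.OrdConnected) (f : ℝ → ℝ) (hf : IsPDFOn f I)
    (μ : Measure ℝ) [IsFiniteMeasure μ]
    (ℓ : ℕ) (J : Fin ℓ → Set ℝ)
    (hJ : ∀ i, (J i).OrdConnected ∧ J i ⊆ I ∧ Bornology.IsBounded (J i) ∧ 0 < volume (J i))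
    (hdisj : Pairwise fun i j => Disjoint (J i) (J j))
    (hstar hbar : ℝ → ℝ)
    (hconst : ∀ i, ∃ cst : ℝ, ∀ x ∈ J i, hstar x = cst)
    (hflat : ∀ i, ∀ x ∈ J i, hbar x = (μ (J i)).toReal / (volume (J i)).toReal) :
    ∑ i, ∫ x in J i, |hbar x - hstar x| ≤
      (∑ i, ∫ x in J i, |f x - hstar x|) + akDistFam ℓ J f μ :=
  stmt4_general I f hf μ ℓ J hJ hdisj hstar hbar hconst hflat
end

section
/- Let p(x) = Σ_{j=0}^d c_j x^j be a real polynomial of degree at most d such that |p(x)| ≤ 1 for all x ∈ [−1,1]. Then |c_j| ≤ (√2 + 1)^d for all j = 0, …, d. -/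
/-!
Write `z = (w + w⁻¹) / 2`. Since `deg p ≤ d`, `Q(w) = w ^ d * p((w + w⁻¹) / 2)` is a polynomial
in `w`. On the unit circle `(w + w⁻¹) / 2 = re w ∈ [-1, 1]`, so `|Q| ≤ 1` there, hence on the
closed unit disc by the maximum modulus principle. Every `z` in the closed unit disc is
`(w + w⁻¹) / 2` for some `w` with `√2 - 1 ≤ |w| ≤ 1`, so `|p(z)| ≤ |w|⁻ᵈ ≤ (√2 + 1) ^ d`, and
Cauchy's estimate on the unit circle bounds every coefficient of `p` by the same quantity.
-/

open Polynomial Finset Metric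

namespace Polynomial

theorem iteratedDeriv_eval {𝕜 : Type*} [NontriviallyNormedField 𝕜] (P : 𝕜[X]) (n : ℕ) :
    iteratedDeriv n (fun x => P.eval x) = fun x => (derivative^[n] P).eval x := by
  induction n with
  | zero => rfl
  | succ n ih =>
    rw [iteratedDeriv_succ, ih, Function.iterate_succ_apply']
    ext x
    exact Polynomial.deriv _

theorem norm_coeff_le_of_forall_mem_sphere_norm_eval_le {P : ℂ[X]} {R B : ℝ} (hR : 0 < R)
    (hB : ∀ z ∈ sphere (0 : ℂ) R, ‖P.eval z‖ ≤ B) (n : ℕ) : ‖P.coeff n‖ ≤ B / R ^ n := by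
  have hcauchy := Complex.norm_iteratedDeriv_le_of_forall_mem_sphere_norm_le n hR
    P.differentiable.diffContOnCl hB
  simp only [iteratedDeriv_eval, ← coeff_zero_eq_eval_zero] at hcauchy
  rw [coeff_iterate_derivative, zero_add, Nat.descFactorial_self, nsmul_eq_mul, norm_mul,
    Complex.norm_natCast, mul_div_assoc] at hcauchy
  exact le_of_mul_le_mul_left hcauchy (by positivity)

/-- `w ^ d * P ((w + w⁻¹) / 2)` written out as a polynomial in `w` (valid when
`P.natDegree ≤ d`). -/
noncomputable def joukowskiPullback {K : Type*} [Field K] (d : ℕ) (P : K[X]) : K[X] :=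
  ∑ j ∈ range (d + 1), C (P.coeff j / 2 ^ j) * (X ^ 2 + 1) ^ j * X ^ (d - j)

theorem eval_joukowskiPullback {K : Type*} [Field K] {d : ℕ} {P : K[X]} (hP : P.natDegree ≤ d)
    {w : K} (hw : w ≠ 0) :
    (joukowskiPullback d P).eval w = w ^ d * P.eval ((w + w⁻¹) / 2) := by
  rw [joukowskiPullback, eval_finsetSum, eval_eq_sum_range' (Nat.lt_succ_of_le hP), mul_sum]
  refine sum_congr rfl fun j hj => ?_
  rw [← Nat.sub_add_cancel (Nat.le_of_lt_succ (mem_range.mp hj))]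
  have hw2 : w * (w + w⁻¹) = w ^ 2 + 1 := by field_simp
  simp only [eval_mul, eval_pow, eval_add, eval_C, eval_X, eval_one, Nat.add_sub_cancel, div_pow]
  rw [← hw2, mul_pow, pow_add]
  ring

theorem norm_eval_joukowskiPullback_le {d : ℕ} {P : ℂ[X]} (hP : P.natDegree ≤ d) {M : ℝ}
    (hM : ∀ x ∈ Set.Icc (-1 : ℝ) 1, ‖P.eval (x : ℂ)‖ ≤ M) {w : ℂ} (hw : ‖w‖ ≤ 1) :
    ‖(joukowskiPullback d P).eval w‖ ≤ M := by
  refine Complex.norm_le_of_forall_mem_frontier_norm_le isBounded_ball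
    (joukowskiPullback d P).differentiable.diffContOnCl (fun v hv => ?_)
    (by rwa [closure_ball _ one_ne_zero, mem_closedBall_zero_iff])
  rw [frontier_ball _ one_ne_zero, mem_sphere_zero_iff_norm] at hv
  have hv0 : v ≠ 0 := norm_ne_zero_iff.mp (hv ▸ one_ne_zero)
  have hre : (v + v⁻¹) / 2 = (v.re : ℂ) := by
    rw [RCLike.inv_eq_conj hv, Complex.re_eq_add_conj]
  rw [eval_joukowskiPullback hP hv0, hre, norm_mul, norm_pow, hv, one_pow, one_mul]
  exact hM _ (abs_le.mp (hv ▸ Complex.abs_re_le_norm v))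

end Polynomial

theorem Complex.exists_add_inv_div_two_eq {z : ℂ} (hz : ‖z‖ ≤ 1) :
    ∃ w : ℂ, (w + w⁻¹) / 2 = z ∧ Real.sqrt 2 - 1 ≤ ‖w‖ ∧ ‖w‖ ≤ 1 := by
  obtain ⟨s, hs⟩ := IsAlgClosed.exists_pow_nat_eq (z ^ 2 - 1) two_pos
  -- `z ± s` are the roots of `w ^ 2 - 2 z w + 1`, hence mutually inverse; take the smaller one
  obtain ⟨w, w', hmul, hsum, hle⟩ : ∃ w w' : ℂ, w * w' = 1 ∧ w + w' = 2 * z ∧ ‖w‖ ≤ ‖w'‖ := by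
    rcases le_total ‖z + s‖ ‖z - s‖ with h | h
    · exact ⟨z + s, z - s, by linear_combination -hs, by ring, h⟩
    · exact ⟨z - s, z + s, by linear_combination -hs, by ring, h⟩
  have hw' : w' = w⁻¹ := eq_inv_of_mul_eq_one_right hmul
  have hnorm : ‖w‖ * ‖w'‖ = 1 := by rw [← norm_mul, hmul, norm_one]
  have hw'le : ‖w'‖ ≤ 2 + ‖w‖ := calc
    ‖w'‖ = ‖2 * z - w‖ := by rw [← hsum, add_sub_cancel_left]
    _ ≤ ‖2 * z‖ + ‖w‖ := norm_sub_le _ _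
    _ ≤ 2 + ‖w‖ := by rw [norm_mul, Complex.norm_two]; linarith
  have hsqrt : Real.sqrt 2 ^ 2 = 2 := Real.sq_sqrt zero_le_two
  refine ⟨w, by rw [← hw', hsum]; ring, ?_, ?_⟩
  · nlinarith [mul_le_mul_of_nonneg_left hw'le (norm_nonneg w), Real.sqrt_nonneg 2, norm_nonneg w]
  · nlinarith [mul_le_mul_of_nonneg_left hle (norm_nonneg w), norm_nonneg w]

theorem Polynomial.norm_eval_le_of_norm_le_one {d : ℕ} {P : ℂ[X]} (hP : P.natDegree ≤ d) {M : ℝ}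
    (hM : ∀ x ∈ Set.Icc (-1 : ℝ) 1, ‖P.eval (x : ℂ)‖ ≤ M) {z : ℂ} (hz : ‖z‖ ≤ 1) :
    ‖P.eval z‖ ≤ (Real.sqrt 2 + 1) ^ d * M := by
  obtain ⟨w, rfl, hw_ge, hw_le⟩ := Complex.exists_add_inv_div_two_eq hz
  have hsqrt : 0 < Real.sqrt 2 - 1 := by
    rw [sub_pos, Real.lt_sqrt zero_le_one]; norm_num
  have hw0 : w ≠ 0 := norm_pos_iff.mp (hsqrt.trans_le hw_ge)
  have hpullback := norm_eval_joukowskiPullback_le hP hM hw_le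
  rw [eval_joukowskiPullback hP hw0, norm_mul, norm_pow] at hpullback
  have hconj : (Real.sqrt 2 + 1) ^ d * (Real.sqrt 2 - 1) ^ d = 1 := by
    rw [← mul_pow, show (Real.sqrt 2 + 1) * (Real.sqrt 2 - 1) = 1 by
      linear_combination Real.sq_sqrt zero_le_two, one_pow]
  calc ‖P.eval ((w + w⁻¹) / 2)‖
      = (Real.sqrt 2 + 1) ^ d * ((Real.sqrt 2 - 1) ^ d * ‖P.eval ((w + w⁻¹) / 2)‖) := by
        rw [← mul_assoc, hconj, one_mul]
    _ ≤ (Real.sqrt 2 + 1) ^ d * M := by gcongr; exact hpullback.trans' (by gcongr)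

/-- (Markov) Let `p(x) = ∑_{j=0}^d c_j x^j` be a real polynomial of degree at most `d` such
that `|p(x)| ≤ 1` for all `x ∈ [−1,1]`. Then `|c_j| ≤ (√2 + 1)^d` for all `j = 0, …, d`. -/
theorem stmt7 (d : ℕ) (p : Polynomial ℝ) (hdeg : p.natDegree ≤ d)
    (hbound : ∀ x ∈ Set.Icc (-1 : ℝ) 1, |p.eval x| ≤ 1) :
    ∀ j ≤ d, |p.coeff j| ≤ (Real.sqrt 2 + 1) ^ d := by
  intro j _
  set P : ℂ[X] := p.map Complex.ofRealHom
  have hP : P.natDegree ≤ d := natDegree_map_le.trans hdeg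
  have hM : ∀ x ∈ Set.Icc (-1 : ℝ) 1, ‖P.eval (x : ℂ)‖ ≤ 1 := fun x hx => by
    rw [eval_map, ← Complex.ofRealHom_eq_coe, eval₂_at_apply, Complex.ofRealHom_eq_coe,
      Complex.norm_real]
    exact hbound x hx
  have hcoeff := norm_coeff_le_of_forall_mem_sphere_norm_eval_le one_pos
    (fun z hz => norm_eval_le_of_norm_le_one hP hM (mem_sphere_zero_iff_norm.mp hz).le) j
  simpa [P] using hcoeff
end

section
/- Let α > 0 and let p(x) = Σ_{i=0}^d c_i x^i be a real polynomial of degree at most d such that p(x) ≥ 0 for all x ∈ [−1,1] and ∫_{−1}^1 p(x) dx ≤ α. Then |c_i| ≤ α · (d+1)² · (√2 + 1)^d for all i = 0, …, d. -/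
/-!
Expand `p = ∑ₖ aₖ Pₖ` in the Legendre polynomials, normalised by `Pₖ(1) = 1` and generated by
Bonnet's recurrence `(k+2) Pₖ₊₂ = (2k+3) X Pₖ₊₁ - (k+1) Pₖ`. They solve the Legendre equation
`((x² - 1) Pₖ')' = k(k+1) Pₖ`, which makes them orthogonal on `[-1,1]`, and `∫ Pₖ² = 2/(2k+1)`, so
`aₖ = (2k+1)/2 · ∫ p Pₖ`. The function `k(k+1) Pₖ² + (1 - x²) Pₖ'²` has derivative `2x Pₖ'²`, hence
on `[-1,1]` it is largest at `±1`, where it equals `k(k+1)`; this gives `|Pₖ| ≤ 1` there. As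
`p ≥ 0` on `[-1,1]`, `|∫ p Pₖ| ≤ ∫ p ≤ α`, so `|aₖ| ≤ (2d+1)/2 · α`. Finally the recurrence bounds
every coefficient of `Pₖ` by `(√2 + 1)ᵏ`, since `t = √2 + 1` solves `t² = 2t + 1`.
-/

open Polynomial

theorem Polynomial.eval_le_max_of_mul_derivative_nonneg {G : ℝ[X]}
    (hG : ∀ x, 0 ≤ x * G.derivative.eval x) {a b x : ℝ} (hx : x ∈ Set.Icc a b) :
    G.eval x ≤ max (G.eval a) (G.eval b) := by
  rcases le_total 0 x with h0 | h0
  · have hmono : MonotoneOn (fun x => G.eval x) (Set.Ici 0) := by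
      refine monotoneOn_of_deriv_nonneg (convex_Ici 0) G.continuousOn
        G.differentiable.differentiableOn fun y hy => ?_
      rw [interior_Ici] at hy
      rw [Polynomial.deriv]
      exact nonneg_of_mul_nonneg_right (hG y) hy
    exact le_max_of_le_right (hmono h0 (h0.trans hx.2) hx.2)
  · have hanti : AntitoneOn (fun x => G.eval x) (Set.Iic 0) := by
      refine antitoneOn_of_deriv_nonpos (convex_Iic 0) G.continuousOn
        G.differentiable.differentiableOn fun y hy => ?_
      rw [interior_Iic] at hy
      rw [Polynomial.deriv]
      exact nonpos_of_mul_nonneg_right (hG y) hy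
    exact le_max_of_le_left (hanti (hx.1.trans h0) h0 hx.1)

noncomputable def legendre : ℕ → ℝ[X]
  | 0 => 1
  | 1 => X
  | k + 2 =>
    C ((2 * (k : ℝ) + 3) / (k + 2)) * X * legendre (k + 1) -
      C (((k : ℝ) + 1) / (k + 2)) * legendre k

@[simp] theorem legendre_zero : legendre 0 = 1 := rfl

@[simp] theorem legendre_one : legendre 1 = X := rfl

theorem legendre_add_two (k : ℕ) :
    ((k : ℝ[X]) + 2) * legendre (k + 2) =
      (2 * (k : ℝ[X]) + 3) * X * legendre (k + 1) - ((k : ℝ[X]) + 1) * legendre k := by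
  have hk : (k : ℝ) + 2 ≠ 0 := by positivity
  have hcast : ((k : ℝ[X]) + 2) = C ((k : ℝ) + 2) := by simp [map_ofNat]
  rw [legendre, hcast, mul_sub, ← mul_assoc, ← mul_assoc, ← mul_assoc, ← C_mul, ← C_mul,
    mul_div_cancel₀ _ hk, mul_div_cancel₀ _ hk]
  simp [map_ofNat]

theorem natDegree_legendre_le (k : ℕ) : (legendre k).natDegree ≤ k := by
  induction k using Nat.twoStepInduction with
  | zero => simp
  | one => simp
  | more k ih₀ ih₁ =>
    rw [legendre]
    refine (natDegree_sub_le _ _).trans (max_le ?_ ?_)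
    · refine (natDegree_mul_le).trans ?_
      have := (natDegree_C_mul_le ((2 * (k : ℝ) + 3) / (k + 2)) (X : ℝ[X])).trans natDegree_X_le
      omega
    · exact (natDegree_C_mul_le _ _).trans (by omega)

theorem coeff_legendre_self_ne_zero (k : ℕ) : (legendre k).coeff k ≠ 0 := by
  induction k using Nat.twoStepInduction with
  | zero => simp
  | one => simp
  | more k _ ih₁ =>
    have hlow : (legendre k).coeff (k + 2) = 0 :=
      coeff_eq_zero_of_natDegree_lt ((natDegree_legendre_le k).trans_lt (by omega))
    rw [legendre, coeff_sub, coeff_C_mul, mul_assoc, coeff_C_mul, coeff_X_mul, hlow]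
    simp only [mul_zero, sub_zero]
    exact mul_ne_zero (by positivity) ih₁

theorem eval_legendre_one (k : ℕ) : (legendre k).eval 1 = 1 := by
  induction k using Nat.twoStepInduction with
  | zero => simp
  | one => simp
  | more k ih₀ ih₁ =>
    have h := congrArg (eval 1) (legendre_add_two k)
    simp only [eval_mul, eval_sub, eval_add, eval_natCast, eval_ofNat, eval_X, eval_one,
      ih₀, ih₁] at h
    have hk : (k : ℝ) + 2 ≠ 0 := by positivity
    exact mul_left_cancel₀ hk (by linear_combination h)

theorem eval_legendre_neg_one (k : ℕ) : (legendre k).eval (-1) = (-1) ^ k := by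
  induction k using Nat.twoStepInduction with
  | zero => simp
  | one => simp
  | more k ih₀ ih₁ =>
    have h := congrArg (eval (-1)) (legendre_add_two k)
    simp only [eval_mul, eval_sub, eval_add, eval_natCast, eval_ofNat, eval_X, eval_one,
      ih₀, ih₁] at h
    have hk : (k : ℝ) + 2 ≠ 0 := by positivity
    exact mul_left_cancel₀ hk (by linear_combination h)

theorem derivative_legendre_succ (k : ℕ) :
    derivative (legendre (k + 1)) =
        X * derivative (legendre k) + ((k : ℝ[X]) + 1) * legendre k ∧
      X * derivative (legendre (k + 1)) =
        derivative (legendre k) + ((k : ℝ[X]) + 1) * legendre (k + 1) := by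
  have hne (n : ℕ) : ((n : ℝ[X]) + 2) ≠ 0 := by
    exact_mod_cast (Nat.cast_ne_zero (R := ℝ[X])).2 (by omega : n + 2 ≠ 0)
  induction k with
  | zero => constructor <;> simp
  | succ k ih =>
    obtain ⟨ih₁, ih₂⟩ := ih
    have hrec := legendre_add_two k
    have hder := congrArg derivative hrec
    simp only [derivative_mul, derivative_sub, derivative_add, derivative_X, derivative_natCast,
      derivative_ofNat, derivative_one, zero_mul, mul_one, add_zero, zero_add] at hder
    push_cast
    constructor
    · refine mul_left_cancel₀ (hne k) ?_
      linear_combination hder + ((k : ℝ[X]) + 1) * ih₂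
    · refine mul_left_cancel₀ (hne k) ?_
      linear_combination X * hder - ((k : ℝ[X]) + 2) * hrec + (2 * (k : ℝ[X]) + 3) * X * ih₂
        - ((k : ℝ[X]) + 2) * ih₁

theorem legendre_ode (k : ℕ) :
    derivative ((X ^ 2 - 1) * derivative (legendre k)) =
      (k : ℝ[X]) * ((k : ℝ[X]) + 1) * legendre k := by
  obtain ⟨h₁, h₂⟩ := derivative_legendre_succ k
  have h₁' := congrArg derivative h₁
  have h₂' := congrArg derivative h₂
  simp only [derivative_mul, derivative_add, derivative_X, derivative_natCast, derivative_one,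
    zero_mul, one_mul, add_zero, zero_add] at h₁' h₂'
  simp only [derivative_mul, derivative_sub, derivative_X_sq, derivative_one, sub_zero, map_ofNat]
  linear_combination -X * h₁' + h₂' + (k : ℝ[X]) * h₁

noncomputable def integralNegOneOne : ℝ[X] →ₗ[ℝ] ℝ where
  toFun q := ∫ x in (-1 : ℝ)..1, q.eval x
  map_add' q r := by
    simpa using intervalIntegral.integral_add (q.continuous.intervalIntegrable _ _)
      (r.continuous.intervalIntegrable _ _)
  map_smul' a q := by simp

theorem integralNegOneOne_apply (q : ℝ[X]) :
    integralNegOneOne q = ∫ x in (-1 : ℝ)..1, q.eval x := rfl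

theorem integralNegOneOne_C_mul (a : ℝ) (q : ℝ[X]) :
    integralNegOneOne (C a * q) = a * integralNegOneOne q := by
  rw [C_mul', map_smul, smul_eq_mul]

theorem integralNegOneOne_nonneg {p : ℝ[X]}
    (hp : ∀ x ∈ Set.Icc (-1 : ℝ) 1, 0 ≤ p.eval x) : 0 ≤ integralNegOneOne p :=
  intervalIntegral.integral_nonneg (by norm_num) hp

theorem integralNegOneOne_derivative (q : ℝ[X]) :
    integralNegOneOne (derivative q) = q.eval 1 - q.eval (-1) :=
  intervalIntegral.integral_eq_sub_of_hasDerivAt (fun x _ => q.hasDerivAt x)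
    (q.derivative.continuous.intervalIntegrable _ _)

theorem integral_legendre_mul_legendre_of_ne {j k : ℕ} (h : j ≠ k) :
    integralNegOneOne (legendre j * legendre k) = 0 := by
  set W : ℝ[X] := (X ^ 2 - 1) *
    (derivative (legendre j) * legendre k - legendre j * derivative (legendre k))
  have hW : derivative W = C ((j : ℝ) * (j + 1) - k * (k + 1)) * (legendre j * legendre k) := by
    have hj := legendre_ode j
    have hk := legendre_ode k
    have hC : C ((j : ℝ) * (j + 1) - k * (k + 1)) = (j : ℝ[X]) * (j + 1) - k * (k + 1) := by
      simp
    simp only [W, hC, derivative_mul, derivative_sub, derivative_X_sq, derivative_one,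
      map_ofNat, sub_zero] at hj hk ⊢
    linear_combination legendre k * hj - legendre j * hk
  have hc : (j : ℝ) * (j + 1) - k * (k + 1) ≠ 0 := by
    have hjk : (j : ℝ) - k ≠ 0 := sub_ne_zero.2 (by exact_mod_cast h)
    have : (j : ℝ) * (j + 1) - k * (k + 1) = (j - k) * (j + k + 1) := by ring
    rw [this]
    exact mul_ne_zero hjk (by positivity)
  have h0 := integralNegOneOne_derivative W
  rw [hW, integralNegOneOne_C_mul] at h0
  simp only [W, eval_mul, eval_sub, eval_pow, eval_X, eval_one] at h0
  norm_num at h0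
  exact h0.resolve_left hc

theorem integral_X_mul_legendre_succ_mul_legendre (k : ℕ) :
    integralNegOneOne (X * legendre (k + 1) * legendre k) =
      ((k + 1) / (2 * k + 3)) * integralNegOneOne (legendre k * legendre k) := by
  have e : C ((k : ℝ) + 2) * (legendre (k + 2) * legendre k) =
      C (2 * (k : ℝ) + 3) * (X * legendre (k + 1) * legendre k) -
        C ((k : ℝ) + 1) * (legendre k * legendre k) := by
    simp only [map_add, map_mul, map_natCast, map_ofNat, map_one]
    linear_combination legendre k * legendre_add_two k
  have e' := congrArg integralNegOneOne e
  rw [map_sub, integralNegOneOne_C_mul, integralNegOneOne_C_mul, integralNegOneOne_C_mul,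
    integral_legendre_mul_legendre_of_ne (by omega : k + 2 ≠ k)] at e'
  field_simp
  linarith

theorem integral_legendre_mul_self (k : ℕ) :
    integralNegOneOne (legendre k * legendre k) = 2 / (2 * k + 1) := by
  induction k using Nat.twoStepInduction with
  | zero => norm_num [integralNegOneOne_apply]
  | one =>
    have h := integral_X_mul_legendre_succ_mul_legendre 0
    simp only [zero_add, legendre_zero, legendre_one, mul_one] at h
    rw [legendre_one, h]
    norm_num [integralNegOneOne_apply]
  | more k _ ih₁ =>
    have e : C ((k : ℝ) + 2) * (legendre (k + 2) * legendre (k + 2)) =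
        C (2 * (k : ℝ) + 3) * (X * legendre (k + 2) * legendre (k + 1)) -
          C ((k : ℝ) + 1) * (legendre k * legendre (k + 2)) := by
      simp only [map_add, map_mul, map_natCast, map_ofNat, map_one]
      linear_combination legendre (k + 2) * legendre_add_two k
    have e' := congrArg integralNegOneOne e
    rw [map_sub, integralNegOneOne_C_mul, integralNegOneOne_C_mul, integralNegOneOne_C_mul,
      integral_legendre_mul_legendre_of_ne (by omega : k ≠ k + 2),
      integral_X_mul_legendre_succ_mul_legendre (k + 1), ih₁] at e'
    have hk : (k : ℝ) + 2 ≠ 0 := by positivity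
    refine mul_left_cancel₀ hk (e'.trans ?_)
    push_cast
    field_simp
    ring

theorem derivative_legendre_energy (k : ℕ) :
    derivative ((k : ℝ[X]) * ((k : ℝ[X]) + 1) * legendre k ^ 2 +
        (1 - X ^ 2) * derivative (legendre k) ^ 2) =
      2 * X * derivative (legendre k) ^ 2 := by
  have hode := legendre_ode k
  simp only [derivative_mul, derivative_sub, derivative_X_sq, derivative_one, map_ofNat,
    sub_zero] at hode
  simp only [derivative_add, derivative_mul, derivative_sub, derivative_pow, derivative_X,
    derivative_one, derivative_natCast, map_natCast]
  linear_combination (-2 * derivative (legendre k)) * hode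

theorem abs_eval_legendre_le_one (k : ℕ) {x : ℝ} (hx : x ∈ Set.Icc (-1 : ℝ) 1) :
    |(legendre k).eval x| ≤ 1 := by
  rcases Nat.eq_zero_or_pos k with rfl | hk
  · simp
  set G : ℝ[X] := (k : ℝ[X]) * ((k : ℝ[X]) + 1) * legendre k ^ 2 +
    (1 - X ^ 2) * derivative (legendre k) ^ 2
  have hG : ∀ y, 0 ≤ y * G.derivative.eval y := fun y => by
    simp only [G, derivative_legendre_energy, eval_mul, eval_pow, eval_X, eval_ofNat]
    nlinarith [sq_nonneg (y * (derivative (legendre k)).eval y)]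
  have hends : max (G.eval (-1)) (G.eval 1) = k * (k + 1) := by
    simp [G, eval_legendre_one, eval_legendre_neg_one, pow_right_comm _ k 2]
  have hx2 : 0 ≤ 1 - x ^ 2 := by nlinarith [hx.1, hx.2]
  have hGx : (k : ℝ) * (k + 1) * (legendre k).eval x ^ 2 ≤ G.eval x := by
    simp only [G, eval_add, eval_mul, eval_pow, eval_sub, eval_one, eval_X, eval_natCast]
    nlinarith [mul_nonneg hx2 (sq_nonneg ((derivative (legendre k)).eval x))]
  have hle : (k : ℝ) * (k + 1) * (legendre k).eval x ^ 2 ≤ k * (k + 1) * 1 := by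
    linarith [hends ▸ eval_le_max_of_mul_derivative_nonneg hG hx]
  exact (sq_le_one_iff_abs_le_one _).1 (le_of_mul_le_mul_left hle (by positivity))

theorem abs_coeff_legendre_le (k i : ℕ) :
    |(legendre k).coeff i| ≤ (Real.sqrt 2 + 1) ^ k := by
  induction k using Nat.twoStepInduction generalizing i with
  | zero => by_cases hi : i = 0 <;> simp [coeff_one, hi]
  | one =>
    by_cases hi : i = 1
    · simp [coeff_X, hi]
    · simp [coeff_X, Ne.symm hi]
      positivity
  | more k ih₀ ih₁ =>
    have hX : |(X * legendre (k + 1)).coeff i| ≤ (Real.sqrt 2 + 1) ^ (k + 1) := by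
      cases i with
      | zero => simp; positivity
      | succ i => rw [coeff_X_mul]; exact ih₁ i
    have hk : (0 : ℝ) < k + 2 := by positivity
    have ha : |(2 * (k : ℝ) + 3) / (k + 2)| ≤ 2 := by
      rw [abs_of_nonneg (by positivity), div_le_iff₀ hk]
      linarith
    have hb : |((k : ℝ) + 1) / (k + 2)| ≤ 1 := by
      rw [abs_of_nonneg (by positivity), div_le_one hk]
      linarith
    have hs : (Real.sqrt 2 + 1) ^ 2 = 2 * (Real.sqrt 2 + 1) + 1 := by
      ring_nf; rw [Real.sq_sqrt zero_le_two]; ring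
    rw [legendre, coeff_sub, mul_assoc, coeff_C_mul, coeff_C_mul]
    calc _ ≤ |(2 * (k : ℝ) + 3) / (k + 2)| * |(X * legendre (k + 1)).coeff i| +
          |((k : ℝ) + 1) / (k + 2)| * |(legendre k).coeff i| := by
          rw [← abs_mul, ← abs_mul]; exact abs_sub _ _
      _ ≤ 2 * (Real.sqrt 2 + 1) ^ (k + 1) + 1 * (Real.sqrt 2 + 1) ^ k := by
          gcongr
          exact ih₀ i
      _ = (Real.sqrt 2 + 1) ^ k * (Real.sqrt 2 + 1) ^ 2 := by rw [hs]; ring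
      _ = (Real.sqrt 2 + 1) ^ (k + 2) := by ring

theorem exists_eq_sum_smul_legendre {q : ℝ[X]} {n : ℕ} (hq : q.natDegree ≤ n) :
    ∃ a : ℕ → ℝ, q = ∑ k ∈ Finset.range (n + 1), a k • legendre k := by
  induction n generalizing q with
  | zero =>
    refine ⟨fun _ => q.coeff 0, ?_⟩
    conv_lhs => rw [eq_C_of_natDegree_le_zero hq]
    simp [smul_eq_C_mul]
  | succ n ih =>
    set t := q.coeff (n + 1) / (legendre (n + 1)).coeff (n + 1)
    have hr : (q - t • legendre (n + 1)).natDegree ≤ n := by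
      refine natDegree_le_iff_coeff_eq_zero.2 fun m hm => ?_
      rcases (Nat.succ_le_of_lt hm).eq_or_lt with rfl | hlt
      · simp [t, div_mul_cancel₀ _ (coeff_legendre_self_ne_zero _)]
      · rw [coeff_sub, coeff_smul, coeff_eq_zero_of_natDegree_lt (hq.trans_lt hlt),
          coeff_eq_zero_of_natDegree_lt ((natDegree_legendre_le _).trans_lt hlt), smul_zero,
          sub_zero]
    obtain ⟨a, ha⟩ := ih hr
    refine ⟨Function.update a (n + 1) t, ?_⟩
    rw [Finset.sum_range_succ, Function.update_self, Finset.sum_congr rfl fun k hk =>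
      by rw [Function.update_of_ne (by simp at hk; omega)], ← ha, sub_add_cancel]

theorem integral_mul_legendre_of_eq_sum {q : ℝ[X]} {n : ℕ} {a : ℕ → ℝ}
    (hq : q = ∑ k ∈ Finset.range (n + 1), a k • legendre k) {k : ℕ} (hk : k ≤ n) :
    integralNegOneOne (q * legendre k) = a k * (2 / (2 * k + 1)) := by
  rw [hq, Finset.sum_mul, map_sum, Finset.sum_eq_single k]
  · rw [smul_mul_assoc, map_smul, integral_legendre_mul_self, smul_eq_mul]
  · intro j _ hj
    rw [smul_mul_assoc, map_smul, integral_legendre_mul_legendre_of_ne hj, smul_zero]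
  · intro hk'
    exact absurd (Finset.mem_range.2 (by omega)) hk'

theorem abs_integral_mul_legendre_le {p : ℝ[X]}
    (hp : ∀ x ∈ Set.Icc (-1 : ℝ) 1, 0 ≤ p.eval x) (k : ℕ) :
    |integralNegOneOne (p * legendre k)| ≤ integralNegOneOne p := by
  have h1 : (-1 : ℝ) ≤ 1 := by norm_num
  refine (intervalIntegral.abs_integral_le_integral_abs h1).trans
    (intervalIntegral.integral_mono_on h1 ((p * legendre k).continuous.abs.intervalIntegrable _ _)
      (p.continuous.intervalIntegrable _ _) fun x hx => ?_)
  rw [eval_mul, abs_mul, abs_of_nonneg (hp x hx)]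
  exact mul_le_of_le_one_right (hp x hx) (abs_eval_legendre_le_one k hx)

theorem abs_coeff_le_of_nonneg_on_Icc {p : ℝ[X]} {d : ℕ} (hdeg : p.natDegree ≤ d)
    (hp : ∀ x ∈ Set.Icc (-1 : ℝ) 1, 0 ≤ p.eval x) (i : ℕ) :
    |p.coeff i| ≤
      (d + 1) * ((2 * d + 1) / 2 * integralNegOneOne p) * (Real.sqrt 2 + 1) ^ d := by
  obtain ⟨a, ha⟩ := exists_eq_sum_smul_legendre hdeg
  have hcoeff :
      ∀ k ∈ Finset.range (d + 1), |a k| ≤ (2 * d + 1) / 2 * integralNegOneOne p := by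
    intro k hk
    have hkd : k ≤ d := Nat.lt_succ_iff.1 (Finset.mem_range.1 hk)
    have h := abs_integral_mul_legendre_le hp k
    rw [integral_mul_legendre_of_eq_sum ha hkd, abs_mul,
      abs_of_pos (by positivity : (0 : ℝ) < 2 / (2 * k + 1))] at h
    have hkd' : (k : ℝ) ≤ d := by exact_mod_cast hkd
    have hI := integralNegOneOne_nonneg hp
    calc |a k| = (2 * k + 1) / 2 * (|a k| * (2 / (2 * k + 1))) := by field_simp
      _ ≤ (2 * d + 1) / 2 * integralNegOneOne p := by gcongr
  calc |p.coeff i| = |∑ k ∈ Finset.range (d + 1), a k * (legendre k).coeff i| := by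
        rw [ha, finsetSum_coeff]; simp only [coeff_smul, smul_eq_mul]
    _ ≤ ∑ k ∈ Finset.range (d + 1), |a k| * |(legendre k).coeff i| := by
        simpa only [abs_mul] using
          Finset.abs_sum_le_sum_abs (fun k => a k * (legendre k).coeff i) _
    _ ≤ ∑ k ∈ Finset.range (d + 1),
          (2 * d + 1) / 2 * integralNegOneOne p * (Real.sqrt 2 + 1) ^ d := by
        refine Finset.sum_le_sum fun k hk => ?_
        have hkd : k ≤ d := Nat.lt_succ_iff.1 (Finset.mem_range.1 hk)
        gcongr
        · exact (abs_nonneg _).trans (hcoeff k hk)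
        · exact hcoeff k hk
        · exact (abs_coeff_legendre_le k i).trans
            (pow_le_pow_right₀ (by linarith [Real.sqrt_nonneg 2]) hkd)
    _ = (d + 1) * ((2 * d + 1) / 2 * integralNegOneOne p) * (Real.sqrt 2 + 1) ^ d := by
        simp only [Finset.sum_const, Finset.card_range, nsmul_eq_mul]
        push_cast
        ring

theorem stmt8_general (d : ℕ) (α : ℝ) (p : Polynomial ℝ) (hdeg : p.natDegree ≤ d)
    (hpos : ∀ x ∈ Set.Icc (-1 : ℝ) 1, 0 ≤ p.eval x)
    (hint : (∫ x in (-1 : ℝ)..1, p.eval x) ≤ α) :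
    ∀ i ≤ d, |p.coeff i| ≤ α * ((d : ℝ) + 1) ^ 2 * (Real.sqrt 2 + 1) ^ d := by
  intro i _
  have hI := integralNegOneOne_nonneg hpos
  calc |p.coeff i|
      ≤ (d + 1) * ((2 * d + 1) / 2 * integralNegOneOne p) * (Real.sqrt 2 + 1) ^ d :=
        abs_coeff_le_of_nonneg_on_Icc hdeg hpos i
    _ ≤ (d + 1) * ((d + 1) * α) * (Real.sqrt 2 + 1) ^ d := by
        gcongr
        · linarith
        · exact hint
    _ = α * ((d : ℝ) + 1) ^ 2 * (Real.sqrt 2 + 1) ^ d := by ring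

/-- Let `α > 0` and let `p(x) = ∑_{i=0}^d c_i x^i` be a real polynomial of degree at most
`d` such that `p(x) ≥ 0` for all `x ∈ [−1,1]` and `∫_{−1}^1 p(x) dx ≤ α`. Then
`|c_i| ≤ α · (d+1)² · (√2 + 1)^d` for all `i = 0, …, d`. -/
theorem stmt8 (d : ℕ) (α : ℝ) (hα : 0 < α) (p : Polynomial ℝ) (hdeg : p.natDegree ≤ d)
    (hpos : ∀ x ∈ Set.Icc (-1 : ℝ) 1, 0 ≤ p.eval x)
    (hint : (∫ x in (-1 : ℝ)..1, p.eval x) ≤ α) :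
    ∀ i ≤ d, |p.coeff i| ≤ α * ((d : ℝ) + 1) ^ 2 * (Real.sqrt 2 + 1) ^ d :=
  stmt8_general d α p hdeg hpos hint
end

section
/- Let α > 0 and let p be a real polynomial of degree at most d such that p(x) ≥ 0 for all x ∈ [−1,1] and ∫_{−1}^1 p(x) dx ≤ α. Then p(x) ≤ α · (d+1)² for all x ∈ [−1,1]. -/
/-!
Let `P` be an antiderivative of `p`. Since `p ≥ 0` and `∫_{-1}^1 p ≤ α`, the polynomial
`F(x) = ∫_{-1}^x p - α/2` of degree at most `d + 1` satisfies `|F| ≤ α/2` on `[-1, 1]`.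
Every `x ∈ [-1, 1]` is an endpoint of a subinterval of `[-1, 1]` of length `1`, and the
Markov brothers' inequality at the endpoint of that subinterval (Mathlib's extremality of the
Chebyshev polynomial `T_{d+1}`, rescaled) gives `p(x) = F'(x) ≤ 2 (d+1)² · α/2`.
-/

open Polynomial Set

theorem exists_derivative_eq_of_natDegree_le {K : Type*} [Field K] [CharZero K] {p : K[X]}
    {n : ℕ} (hp : p.natDegree ≤ n) :
    ∃ P : K[X], derivative P = p ∧ P.natDegree ≤ n + 1 := by
  refine ⟨∑ i ∈ Finset.range (n + 1), C (p.coeff i / (i + 1)) * X ^ (i + 1), ?_, ?_⟩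
  · conv_rhs => rw [p.as_sum_range' (n + 1) (by omega)]
    rw [derivative_sum]
    refine Finset.sum_congr rfl fun i _ => ?_
    rw [derivative_C_mul_X_pow, add_tsub_cancel_right, ← C_mul_X_pow_eq_monomial]
    congr 2
    push_cast
    field_simp
  · refine natDegree_sum_le_of_forall_le _ _ fun i hi => ?_
    exact (natDegree_C_mul_X_pow_le _ _).trans (by have := Finset.mem_range.1 hi; omega)

theorem intervalIntegral_mem_Icc_of_nonneg {f : ℝ → ℝ} {a b u : ℝ}
    (hf : IntervalIntegrable f MeasureTheory.volume a b) (hnn : ∀ x ∈ Icc a b, 0 ≤ f x)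
    (hu : u ∈ Icc a b) :
    ∫ x in a..u, f x ∈ Icc 0 (∫ x in a..b, f x) :=
  ⟨intervalIntegral.integral_nonneg hu.1 fun x hx => hnn x ⟨hx.1, hx.2.trans hu.2⟩,
    intervalIntegral.integral_mono_interval le_rfl hu.1 hu.2
      ((MeasureTheory.ae_restrict_iff' measurableSet_Ioc).2
        (Filter.Eventually.of_forall fun x hx => hnn x (Ioc_subset_Icc_self hx))) hf⟩

theorem derivative_eval_one_le {n : ℕ} {P : ℝ[X]} {M : ℝ} (hdeg : P.natDegree ≤ n)
    (hP : ∀ x ∈ Icc (-1 : ℝ) 1, |P.eval x| ≤ M) :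
    (derivative P).eval 1 ≤ n ^ 2 * M := by
  rcases (abs_nonneg _).trans (hP 0 ⟨by norm_num, by norm_num⟩) |>.eq_or_lt with hM | hM
  · have : P = 0 := eq_zero_of_infinite_isRoot P <|
      (Icc_infinite (by norm_num : (-1 : ℝ) < 1)).mono fun x hx =>
        abs_nonpos_iff.1 (hM ▸ hP x hx)
    simp [this, ← hM]
  · have key := Chebyshev.eval_iterate_derivative_le_of_forall_abs_le_one (k := 1) le_rfl
      (P := C M⁻¹ * P) (degree_le_of_natDegree_le ((natDegree_C_mul_le _ _).trans hdeg))
      fun x hx => by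
        rw [eval_mul, eval_C, abs_mul, abs_inv, abs_of_pos hM, inv_mul_le_iff₀ hM, mul_one]
        exact hP x hx
    simp only [Function.iterate_one, derivative_C_mul, eval_mul, eval_C,
      Chebyshev.derivative_T_eval_one, Int.cast_natCast] at key
    rwa [inv_mul_le_iff₀ hM, mul_comm] at key

theorem abs_derivative_eval_one_le {n : ℕ} {P : ℝ[X]} {M : ℝ} (hdeg : P.natDegree ≤ n)
    (hP : ∀ x ∈ Icc (-1 : ℝ) 1, |P.eval x| ≤ M) :
    |(derivative P).eval 1| ≤ n ^ 2 * M := by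
  refine abs_le.2 ⟨?_, derivative_eval_one_le hdeg hP⟩
  have := derivative_eval_one_le (n := n) (P := -P) (by rwa [natDegree_neg]) (by simpa using hP)
  rw [derivative_neg, eval_neg] at this
  linarith

theorem abs_derivative_eval_le {n : ℕ} {P : ℝ[X]} {M : ℝ} (hdeg : P.natDegree ≤ n)
    (hP : ∀ x ∈ Icc (-1 : ℝ) 1, |P.eval x| ≤ M) {x : ℝ} (hx : x ∈ Icc (-1 : ℝ) 1) :
    |(derivative P).eval x| ≤ 2 * n ^ 2 * M := by
  obtain ⟨σ, hσ, hmaps⟩ : ∃ σ : ℝ, |σ| = 1 ∧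
      ∀ t ∈ Icc (-1 : ℝ) 1, x + σ / 2 * (t - 1) ∈ Icc (-1 : ℝ) 1 := by
    rcases le_total 0 x with h | h
    · exact ⟨1, abs_one, fun t ht => ⟨by linarith [ht.1], by linarith [ht.2, hx.2]⟩⟩
    · exact ⟨-1, by simp, fun t ht => ⟨by linarith [ht.2, hx.1], by linarith [ht.1]⟩⟩
  set G := P.comp (C x + C (σ / 2) * (X - 1))
  have hGdeg : G.natDegree ≤ n := by
    refine natDegree_comp_le.trans ?_
    have : (C x + C (σ / 2) * (X - 1)).natDegree ≤ 1 := by compute_degree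
    nlinarith
  have hG : ∀ t ∈ Icc (-1 : ℝ) 1, |G.eval t| ≤ M := fun t ht => by
    simpa [G] using hP _ (hmaps t ht)
  have hG' : (derivative G).eval 1 = σ / 2 * (derivative P).eval x := by
    simp [G, derivative_comp]
  have := abs_derivative_eval_one_le hGdeg hG
  rw [hG', abs_mul, abs_div, hσ] at this
  norm_num at this
  linarith

theorem stmt9_general (d : ℕ) (α : ℝ) (p : Polynomial ℝ) (hdeg : p.natDegree ≤ d)
    (hpos : ∀ x ∈ Set.Icc (-1 : ℝ) 1, 0 ≤ p.eval x)
    (hint : (∫ x in (-1 : ℝ)..1, p.eval x) ≤ α) :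
    ∀ x ∈ Set.Icc (-1 : ℝ) 1, p.eval x ≤ α * ((d : ℝ) + 1) ^ 2 := by
  intro x hx
  obtain ⟨P, hPp, hPdeg⟩ := exists_derivative_eq_of_natDegree_le hdeg
  have hFTC : ∀ u, ∫ t in (-1 : ℝ)..u, p.eval t = P.eval u - P.eval (-1) := fun u =>
    intervalIntegral.integral_eq_sub_of_hasDerivAt (fun t _ => hPp ▸ P.hasDerivAt t)
      (p.continuous.intervalIntegrable _ _)
  set F := P - C (P.eval (-1) + α / 2)
  have hF : ∀ u ∈ Icc (-1 : ℝ) 1, |F.eval u| ≤ α / 2 := fun u hu => by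
    have := intervalIntegral_mem_Icc_of_nonneg (p.continuous.intervalIntegrable _ _) hpos hu
    rw [hFTC, hFTC] at this
    simp only [F, eval_sub, eval_C, abs_le]
    constructor <;> linarith [this.1, this.2, hFTC 1]
  have hFdeg : F.natDegree ≤ d + 1 := natDegree_sub_C.trans_le hPdeg
  have := abs_derivative_eval_le hFdeg hF hx
  rw [derivative_sub, derivative_C, sub_zero, hPp] at this
  push_cast at this
  linarith [le_abs_self (p.eval x)]

/-- Let `α > 0` and let `p` be a real polynomial of degree at most `d` such that `p(x) ≥ 0`
for all `x ∈ [−1,1]` and `∫_{−1}^1 p(x) dx ≤ α`. Then `p(x) ≤ α · (d+1)²` for all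
`x ∈ [−1,1]`. -/
theorem stmt9 (d : ℕ) (α : ℝ) (hα : 0 < α) (p : Polynomial ℝ) (hdeg : p.natDegree ≤ d)
    (hpos : ∀ x ∈ Set.Icc (-1 : ℝ) 1, 0 ≤ p.eval x)
    (hint : (∫ x in (-1 : ℝ)..1, p.eval x) ≤ α) :
    ∀ x ∈ Set.Icc (-1 : ℝ) 1, p.eval x ≤ α * ((d : ℝ) + 1) ^ 2 :=
  stmt9_general d α p hdeg hpos hint
end

section
/- Let d, k ∈ ℕ, τ ≥ 0, η > 0, and let μ be a finite Borel measure on [−1,1]. If C_{τ,d,k,μ} is nonempty, then there exists c₀ ∈ ℝ^{d+1} such that the closed Euclidean ball of radius η/(4(d+1)) centered at c₀ is contained in C_{τ+η,d,k,μ}. -/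
open MeasureTheory Set

/-- The `A_k`-distance between a function `g` and a finite Borel measure `μ` on a
subinterval `J`: the supremum over all collections of `k` pairwise disjoint subintervals
`I₁, …, I_k` of `J` of `∑ᵢ |∫_{Iᵢ} g − μ(Iᵢ)|`. -/
noncomputable def akDist (k : ℕ) (J : Set ℝ) (g : ℝ → ℝ) (μ : Measure ℝ) : ℝ :=
  sSup { s : ℝ | ∃ I : Fin k → Set ℝ,
    (∀ i, I i ⊆ J ∧ (I i).OrdConnected) ∧
    (Pairwise fun i j => Disjoint (I i) (I j)) ∧
    s = ∑ i, |(∫ x in I i, g x) - (μ (I i)).toReal| }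

/-- The polynomial `p_c(x) = ∑ᵢ cᵢ xⁱ` associated with a coefficient vector
`c ∈ ℝ^{d+1}`. -/
noncomputable def pc (d : ℕ) (c : Fin (d + 1) → ℝ) (x : ℝ) : ℝ :=
  ∑ i, c i * x ^ (i : ℕ)

/-- The set of `(τ,d,k,μ)`-feasible polynomial coefficient vectors: those `c ∈ ℝ^{d+1}`
with `p_c ≥ 0` on `[−1,1]` and `‖p_c − μ‖_{A_k,[−1,1]} ≤ τ`. -/
def feasibleSet (τ : ℝ) (d k : ℕ) (μ : Measure ℝ) : Set (Fin (d + 1) → ℝ) :=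
  { c | (∀ x ∈ Set.Icc (-1 : ℝ) 1, 0 ≤ pc d c x) ∧
    akDist k (Set.Icc (-1 : ℝ) 1) (pc d c) μ ≤ τ }

/-!
Start from a feasible `c` and raise its constant coefficient by `η / 4`. On `[-1, 1]` every
monomial is bounded by `1`, so a coefficient vector in the Euclidean ball of radius
`η / (4(d+1))` moves the polynomial by at most `(d+1)` times the radius, i.e. `η / 4`,
pointwise. Hence every polynomial of the ball stays nonnegative and lies within `η / 2` of
`p_c` on `[-1, 1]`, and the `A_k`-distance to `μ` grows by at most `∫_{[-1,1]} η / 2 = η`.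
-/

section DisjointFamilies

variable {α ι : Type*} [MeasurableSpace α] [Fintype ι] {I : ι → Set α} {J : Set α}

lemma sum_measureReal_le_of_pairwise_disjoint (ν : Measure α) (hI : ∀ i, MeasurableSet (I i))
    (hIJ : ∀ i, I i ⊆ J) (hd : Pairwise fun i j => Disjoint (I i) (I j)) (hJ : ν J ≠ ⊤) :
    ∑ i, ν.real (I i) ≤ ν.real J := by
  rw [← measureReal_iUnion_fintype hd hI fun i => ne_top_of_le_ne_top hJ (measure_mono (hIJ i))]
  exact measureReal_mono (iUnion_subset hIJ) hJ

lemma sum_setIntegral_le_of_pairwise_disjoint {ν : Measure α} {f : α → ℝ}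
    (hf : IntegrableOn f J ν) (hf0 : 0 ≤ f) (hI : ∀ i, MeasurableSet (I i))
    (hIJ : ∀ i, I i ⊆ J) (hd : Pairwise fun i j => Disjoint (I i) (I j)) :
    ∑ i, ∫ x in I i, f x ∂ν ≤ ∫ x in J, f x ∂ν := by
  rw [← integral_iUnion_fintype hI hd fun i => hf.mono_set (hIJ i)]
  exact setIntegral_mono_set hf (Filter.Eventually.of_forall hf0)
    (Filter.Eventually.of_forall (iUnion_subset hIJ))

end DisjointFamilies

section AkDist

variable {k : ℕ} {J : Set ℝ} {f g : ℝ → ℝ} {μ : Measure ℝ}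

lemma akDist_bddAbove (hg : IntegrableOn g J) (hμ : μ J ≠ ⊤) :
    BddAbove { s : ℝ | ∃ I : Fin k → Set ℝ,
      (∀ i, I i ⊆ J ∧ (I i).OrdConnected) ∧
      (Pairwise fun i j => Disjoint (I i) (I j)) ∧
      s = ∑ i, |(∫ x in I i, g x) - (μ (I i)).toReal| } := by
  refine ⟨(∫ x in J, |g x|) + μ.real J, ?_⟩
  rintro s ⟨I, hIJ, hd, rfl⟩
  have hI : ∀ i, MeasurableSet (I i) := fun i => (hIJ i).2.measurableSet
  have hterm : ∀ i, |(∫ x in I i, g x) - (μ (I i)).toReal| ≤ (∫ x in I i, |g x|) + μ.real (I i) :=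
    fun i => (abs_sub _ _).trans <| add_le_add abs_integral_le_integral_abs
      (abs_of_nonneg measureReal_nonneg).le
  calc ∑ i, |(∫ x in I i, g x) - (μ (I i)).toReal|
      ≤ ∑ i, ((∫ x in I i, |g x|) + μ.real (I i)) := Finset.sum_le_sum fun i _ => hterm i
    _ = (∑ i, ∫ x in I i, |g x|) + ∑ i, μ.real (I i) := Finset.sum_add_distrib
    _ ≤ (∫ x in J, |g x|) + μ.real J :=
      add_le_add
        (sum_setIntegral_le_of_pairwise_disjoint hg.abs (fun x => abs_nonneg (g x)) hI
          (fun i => (hIJ i).1) hd)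
        (sum_measureReal_le_of_pairwise_disjoint μ hI (fun i => (hIJ i).1) hd hμ)

lemma sum_le_akDist (hg : IntegrableOn g J) (hμ : μ J ≠ ⊤) {I : Fin k → Set ℝ}
    (hIJ : ∀ i, I i ⊆ J ∧ (I i).OrdConnected) (hd : Pairwise fun i j => Disjoint (I i) (I j)) :
    ∑ i, |(∫ x in I i, g x) - (μ (I i)).toReal| ≤ akDist k J g μ :=
  le_csSup (akDist_bddAbove hg hμ) ⟨I, hIJ, hd, rfl⟩

lemma akDist_le {t : ℝ}
    (h : ∀ I : Fin k → Set ℝ, (∀ i, I i ⊆ J ∧ (I i).OrdConnected) →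
      (Pairwise fun i j => Disjoint (I i) (I j)) →
      ∑ i, |(∫ x in I i, g x) - (μ (I i)).toReal| ≤ t) :
    akDist k J g μ ≤ t := by
  refine csSup_le ⟨_, fun _ => ∅, fun _ => ⟨empty_subset J, ordConnected_empty⟩,
    fun _ _ _ => disjoint_empty _, rfl⟩ ?_
  rintro s ⟨I, hIJ, hd, rfl⟩
  exact h I hIJ hd

lemma abs_setIntegral_sub_le {s : Set ℝ} (m : ℝ) (hf : IntegrableOn f s) (hg : IntegrableOn g s) :
    |(∫ x in s, f x) - m| ≤ |(∫ x in s, g x) - m| + ∫ x in s, |f x - g x| := by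
  have hfg : |(∫ x in s, f x) - ∫ x in s, g x| ≤ ∫ x in s, |f x - g x| := by
    rw [← integral_sub hf hg]
    exact abs_integral_le_integral_abs
  linarith [abs_sub_le (∫ x in s, f x) (∫ x in s, g x) m]

lemma akDist_le_akDist_add_of_abs_sub_le (hJ : volume J ≠ ⊤) (hf : IntegrableOn f J)
    (hg : IntegrableOn g J) (hμ : μ J ≠ ⊤) {ε : ℝ} (hfg : ∀ x ∈ J, |f x - g x| ≤ ε) :
    akDist k J f μ ≤ akDist k J g μ + ε * volume.real J := by
  have hdist : ∫ x in J, |f x - g x| ≤ ε * volume.real J := by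
    have := norm_setIntegral_le_of_norm_le_const hJ.lt_top
      (f := fun x => |f x - g x|) fun x hx => by simpa using hfg x hx
    exact (le_abs_self _).trans (by simpa using this)
  refine akDist_le fun I hIJ hd => ?_
  have hI : ∀ i, MeasurableSet (I i) := fun i => (hIJ i).2.measurableSet
  calc ∑ i, |(∫ x in I i, f x) - (μ (I i)).toReal|
      ≤ ∑ i, (|(∫ x in I i, g x) - (μ (I i)).toReal| + ∫ x in I i, |f x - g x|) :=
        Finset.sum_le_sum fun i _ =>
          abs_setIntegral_sub_le _ (hf.mono_set (hIJ i).1) (hg.mono_set (hIJ i).1)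
    _ = ∑ i, |(∫ x in I i, g x) - (μ (I i)).toReal| + ∑ i, ∫ x in I i, |f x - g x| :=
        Finset.sum_add_distrib
    _ ≤ akDist k J g μ + ∫ x in J, |f x - g x| :=
        add_le_add (sum_le_akDist hg hμ hIJ hd)
          (sum_setIntegral_le_of_pairwise_disjoint (hf.sub hg).abs (fun x => abs_nonneg _) hI
            (fun i => (hIJ i).1) hd)
    _ ≤ akDist k J g μ + ε * volume.real J := by gcongr

end AkDist

section Polynomial

variable {d : ℕ}

lemma continuous_pc (c : Fin (d + 1) → ℝ) : Continuous (pc d c) := by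
  unfold pc
  fun_prop

lemma pc_add_single_zero (c : Fin (d + 1) → ℝ) (a x : ℝ) :
    pc d (c + Pi.single 0 a) x = pc d c x + a := by
  simp [pc, add_mul, Finset.sum_add_distrib, Pi.single_apply]

lemma abs_pc_sub_pc_le (c c' : Fin (d + 1) → ℝ) {x : ℝ} (hx : |x| ≤ 1) :
    |pc d c x - pc d c' x| ≤ ∑ i, |c i - c' i| := by
  rw [pc, pc, ← Finset.sum_sub_distrib]
  refine (Finset.abs_sum_le_sum_abs _ _).trans (Finset.sum_le_sum fun i _ => ?_)
  rw [← sub_mul, abs_mul, abs_pow]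
  exact mul_le_of_le_one_right (abs_nonneg _) (pow_le_one₀ (abs_nonneg x) hx)

end Polynomial

lemma sum_abs_le_card_mul_of_sqrt_sum_sq_le {ι : Type*} [Fintype ι] {v : ι → ℝ} {r : ℝ}
    (h : Real.sqrt (∑ i, v i ^ 2) ≤ r) : ∑ i, |v i| ≤ Fintype.card ι * r := by
  have hcoord : ∀ i, |v i| ≤ r := fun i => by
    rw [← Real.sqrt_sq_eq_abs]
    exact (Real.sqrt_le_sqrt (Finset.single_le_sum (fun j _ => sq_nonneg (v j))
      (Finset.mem_univ i))).trans h
  simpa using Finset.sum_le_card_nsmul Finset.univ _ r fun i _ => hcoord i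

theorem stmt11_general (d k : ℕ) (τ η : ℝ)
    (μ : Measure ℝ) [IsFiniteMeasure μ]
    (hne : (feasibleSet τ d k μ).Nonempty) :
    ∃ c₀ : Fin (d + 1) → ℝ, ∀ c : Fin (d + 1) → ℝ,
      Real.sqrt (∑ i, (c i - c₀ i) ^ 2) ≤ η / (4 * ((d : ℝ) + 1)) →
      c ∈ feasibleSet (τ + η) d k μ := by
  obtain ⟨c, hc_nonneg, hc_dist⟩ := hne
  refine ⟨c + Pi.single 0 (η / 4), fun c' hc' => ?_⟩
  have hclose : ∀ x ∈ Icc (-1 : ℝ) 1, |pc d c' x - (pc d c x + η / 4)| ≤ η / 4 := by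
    intro x hx
    rw [← pc_add_single_zero]
    refine (abs_pc_sub_pc_le _ _ (abs_le.2 hx)).trans
      ((sum_abs_le_card_mul_of_sqrt_sum_sq_le hc').trans_eq ?_)
    rw [Fintype.card_fin]
    push_cast
    field_simp
  have hnear : ∀ x ∈ Icc (-1 : ℝ) 1, |pc d c' x - pc d c x| ≤ η / 2 := fun x hx => by
    have := abs_le.1 (hclose x hx)
    exact abs_le.2 ⟨by linarith, by linarith⟩
  refine ⟨fun x hx => by linarith [(abs_le.1 (hclose x hx)).1, hc_nonneg x hx], ?_⟩
  calc akDist k (Icc (-1) 1) (pc d c') μ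
      ≤ akDist k (Icc (-1) 1) (pc d c) μ + η / 2 * volume.real (Icc (-1 : ℝ) 1) :=
        akDist_le_akDist_add_of_abs_sub_le (by simp) (continuous_pc c').integrableOn_Icc
          (continuous_pc c).integrableOn_Icc (measure_ne_top μ _) hnear
    _ ≤ τ + η := by
        rw [Real.volume_real_Icc_of_le (by norm_num)]
        linarith

/-- (Lower radius bound) Let `d, k ∈ ℕ`, `τ ≥ 0`, `η > 0`, and let `μ` be a finite Borel
measure on `[−1,1]`. If `C_{τ,d,k,μ}` is nonempty, then there exists `c₀ ∈ ℝ^{d+1}` such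
that the closed Euclidean ball of radius `η/(4(d+1))` centered at `c₀` is contained in
`C_{τ+η,d,k,μ}`. -/
theorem stmt11 (d k : ℕ) (τ η : ℝ) (hτ : 0 ≤ τ) (hη : 0 < η)
    (μ : Measure ℝ) [IsFiniteMeasure μ]
    (hμc : μ (Set.Icc (-1 : ℝ) 1)ᶜ = 0)
    (hne : (feasibleSet τ d k μ).Nonempty) :
    ∃ c₀ : Fin (d + 1) → ℝ, ∀ c : Fin (d + 1) → ℝ,
      Real.sqrt (∑ i, (c i - c₀ i) ^ 2) ≤ η / (4 * ((d : ℝ) + 1)) →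
      c ∈ feasibleSet (τ + η) d k μ :=
  stmt11_general d k τ η μ hne
end
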